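/- Let T be a leaf-colored rooted tree and for each internal node v define M(v) as the maximum of: (a) count_i(u) over all children u of v and all colors i that attain the mode at u, and (b) count_i(v) over all colors i such that v is the LCA of two distinct leaves of color i. Then M(v) equals the mode frequency f^max_v, the maximum over all colors i of count_i(v). -/

import Mathlib

/-!
If the color-`i` leaves below `v` all lie below a single child `u`, then `count_i(v) = count_i(u)`,
which is at most the mode frequency of `u`. Otherwise two of them, `x` and `y`, lie below different
children, and `v` is their LCA: an ancestor `z` of `x` is comparable with the child `u` above `x`
(ancestors of a node form a chain), and `z` cannot be `u` or lie below it, since `y` is not below `u`. Conversely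
every candidate value is at most `f^max_v`, because counts only grow going up.
-/

variable {V : Type*}

/-- One step up: the parent of `a` is `b`. -/
def ParentStep (parent : V → Option V) : V → V → Prop :=
  fun a b => parent a = some b

/-- `Anc parent u v` means `u` is an ancestor of `v` (reflexively: `v` itself counts). -/
def Anc (parent : V → Option V) (u v : V) : Prop :=
  Relation.ReflTransGen (ParentStep parent) v u

def IsLeaf (parent : V → Option V) (v : V) : Prop :=
  ∀ u, parent u ≠ some v

structure IsRootedTree (parent : V → Option V) (root : V) : Prop where
  parent_root : parent root = none
  reaches : ∀ v, Anc parent root v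

def leafDesc (parent : V → Option V) (v : V) : Set V :=
  {l | IsLeaf parent l ∧ Anc parent v l}

noncomputable def cnt (parent : V → Option V) {C : Type*} (color : V → C) (i : C) (v : V) : ℕ :=
  Set.ncard {l | IsLeaf parent l ∧ Anc parent v l ∧ color l = i}

def IsLCA (parent : V → Option V) (w x y : V) : Prop :=
  Anc parent w x ∧ Anc parent w y ∧
    ∀ z, Anc parent z x → Anc parent z y → Anc parent z w

section Ancestors

variable {parent : V → Option V} {u v x y z : V}

lemma parentStep_rightUnique : Relator.RightUnique (ParentStep parent) :=
  fun _ _ _ hb hc => Option.some_injective _ ((hb : _ = _).symm.trans hc)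

lemma anc_of_parent_eq (h : parent u = some v) : Anc parent v u :=
  Relation.ReflTransGen.single h

lemma Anc.trans (h₁ : Anc parent u v) (h₂ : Anc parent v x) : Anc parent u x :=
  Relation.ReflTransGen.trans h₂ h₁

lemma Anc.total (hu : Anc parent u x) (hv : Anc parent v x) :
    Anc parent u v ∨ Anc parent v u :=
  (Relation.ReflTransGen.total_of_right_unique parentStep_rightUnique hu hv).symm

lemma Anc.eq_or_anc_of_parent_eq (h : Anc parent z u) (hu : parent u = some v) :
    z = u ∨ Anc parent z v := by
  rcases Relation.ReflTransGen.cases_head h with rfl | ⟨c, hc, hcz⟩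
  · exact Or.inl rfl
  · obtain rfl : c = v := parentStep_rightUnique hc hu
    exact Or.inr hcz

lemma Anc.exists_child_of_ne (h : Anc parent v x) (hne : x ≠ v) :
    ∃ u, parent u = some v ∧ Anc parent u x := by
  rcases Relation.ReflTransGen.cases_tail h with rfl | ⟨c, hxc, hcv⟩
  · exact absurd rfl hne
  · exact ⟨c, hcv, hxc⟩

lemma isLCA_of_anc_of_not_anc (hu : parent u = some v) (hx : Anc parent u x)
    (hy : Anc parent v y) (huy : ¬ Anc parent u y) : IsLCA parent v x y := by
  refine ⟨(anc_of_parent_eq hu).trans hx, hy, fun z hzx hzy => ?_⟩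
  rcases hzx.total hx with hzu | huz
  · rcases hzu.eq_or_anc_of_parent_eq hu with rfl | hzv
    · exact absurd hzy huy
    · exact hzv
  · exact absurd (huz.trans hzy) huy

end Ancestors

section Counts

variable {parent : V → Option V} {C : Type*} {color : V → C} {i : C} {u v : V}

lemma cnt_le_card [Finite V] : cnt parent color i v ≤ Nat.card V :=
  (Set.ncard_le_ncard (Set.subset_univ _)).trans (Set.ncard_univ V).le

lemma cnt_le_cnt_of_anc [Finite V] (h : Anc parent v u) :
    cnt parent color i u ≤ cnt parent color i v :=
  Set.ncard_le_ncard fun _ ⟨hl, hul, hc⟩ => ⟨hl, h.trans hul, hc⟩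

lemma cnt_eq_of_forall_anc (h : Anc parent v u)
    (hall : ∀ l, IsLeaf parent l → Anc parent v l → color l = i → Anc parent u l) :
    cnt parent color i u = cnt parent color i v := by
  unfold cnt
  congr 1
  ext l
  exact ⟨fun ⟨hl, hul, hc⟩ => ⟨hl, h.trans hul, hc⟩, fun ⟨hl, hvl, hc⟩ => ⟨hl, hall l hl hvl hc, hc⟩⟩

/-- `f^max_v` of the paper. -/
noncomputable def modeFreq (parent : V → Option V) (color : V → C) (v : V) : ℕ :=
  ⨆ i, cnt parent color i v

lemma cnt_le_modeFreq [Finite V] : cnt parent color i v ≤ modeFreq parent color v :=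
  le_ciSup (f := fun j => cnt parent color j v) ⟨Nat.card V, by rintro _ ⟨j, rfl⟩; exact cnt_le_card⟩ i

lemma modeFreq_le_card [Finite V] : modeFreq parent color v ≤ Nat.card V :=
  ciSup_le' fun _ => cnt_le_card

lemma modeFreq_le_of_anc [Finite V] (h : Anc parent v u) :
    modeFreq parent color u ≤ modeFreq parent color v :=
  ciSup_le' fun _ => (cnt_le_cnt_of_anc h).trans cnt_le_modeFreq

lemma exists_child_cnt_eq_or_isLCA (hv : ∃ u, parent u = some v) (i : C) :
    (∃ u, parent u = some v ∧ cnt parent color i u = cnt parent color i v) ∨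
      ∃ x y : V, x ≠ y ∧ IsLeaf parent x ∧ IsLeaf parent y ∧
        color x = i ∧ color y = i ∧ IsLCA parent v x y := by
  by_cases hone : ∃ u, parent u = some v ∧
      ∀ l, IsLeaf parent l → Anc parent v l → color l = i → Anc parent u l
  · obtain ⟨u, hu, hall⟩ := hone
    exact Or.inl ⟨u, hu, cnt_eq_of_forall_anc (anc_of_parent_eq hu) hall⟩
  push Not at hone
  have hv_not_leaf : ¬ IsLeaf parent v := fun h => hv.elim fun u hu => h u hu
  obtain ⟨u₀, hu₀⟩ := hv
  obtain ⟨x, hx, hvx, hcx, -⟩ := hone u₀ hu₀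
  obtain ⟨u, hu, hux⟩ := hvx.exists_child_of_ne fun h => hv_not_leaf (h ▸ hx)
  obtain ⟨y, hy, hvy, hcy, huy⟩ := hone u hu
  exact Or.inr ⟨x, y, fun h => huy (h ▸ hux), hx, hy, hcx, hcy,
    isLCA_of_anc_of_not_anc hu hux hvy huy⟩

end Counts

theorem stmt_11_general [Finite V] (parent : V → Option V) {C : Type*} (color : V → C) (v : V)
    (hint : ∃ u, parent u = some v) :
    sSup ({n | ∃ u, parent u = some v ∧
            n = sSup {m | ∃ i : C, cnt parent color i u = m}} ∪
          {n | ∃ i : C, (∃ x y : V, x ≠ y ∧ IsLeaf parent x ∧ IsLeaf parent y ∧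
              color x = i ∧ color y = i ∧ IsLCA parent v x y) ∧
            n = cnt parent color i v}) =
      sSup {m | ∃ i : C, cnt parent color i v = m} := by
  set candidates := {n | ∃ u, parent u = some v ∧ n = modeFreq parent color u} ∪
    {n | ∃ i : C, (∃ x y : V, x ≠ y ∧ IsLeaf parent x ∧ IsLeaf parent y ∧
        color x = i ∧ color y = i ∧ IsLCA parent v x y) ∧ n = cnt parent color i v}
  change sSup candidates = modeFreq parent color v
  have hbdd : BddAbove candidates := by
    refine ⟨Nat.card V, ?_⟩
    rintro n (⟨u, -, rfl⟩ | ⟨i, -, rfl⟩)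
    exacts [modeFreq_le_card, cnt_le_card]
  apply le_antisymm
  · refine csSup_le' ?_
    rintro n (⟨u, hu, rfl⟩ | ⟨i, -, rfl⟩)
    exacts [modeFreq_le_of_anc (anc_of_parent_eq hu), cnt_le_modeFreq]
  · refine ciSup_le' fun i => ?_
    rcases exists_child_cnt_eq_or_isLCA hint i with ⟨u, hu, hcnt⟩ | hLCA
    · rw [← hcnt]
      exact cnt_le_modeFreq.trans (le_csSup hbdd (Or.inl ⟨u, hu, rfl⟩))
    · exact le_csSup hbdd (Or.inr ⟨i, hLCA, rfl⟩)

/-- Correctness of the merging step: for an internal node `v`, the maximum of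
(a) the mode frequencies of its children and (b) the counts `cnt i v` over colors `i`
for which `v` is the LCA of two distinct leaves colored `i`, equals the mode
frequency of `v`. -/
theorem stmt_11 [Finite V] (parent : V → Option V) (root : V)
    (hT : IsRootedTree parent root) {C : Type*} (color : V → C) (v : V)
    (hint : ∃ u, parent u = some v) :
    sSup ({n | ∃ u, parent u = some v ∧
            n = sSup {m | ∃ i : C, cnt parent color i u = m}} ∪
          {n | ∃ i : C, (∃ x y : V, x ≠ y ∧ IsLeaf parent x ∧ IsLeaf parent y ∧
              color x = i ∧ color y = i ∧ IsLCA parent v x y) ∧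
            n = cnt parent color i v}) =
      sSup {m | ∃ i : C, cnt parent color i v = m} :=
  stmt_11_general parent color v hint
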